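/- arXiv:2310.03437 — 2 statements merged into one kernel-verified Lean document; each statement's English description precedes it below -/
import Mathlib

section
/- Let L ∈ GL(m, ℝ) have all eigenvalues of modulus less than 1 and let A be the unique compact fixed point of L_ε(C) := {L(x) + y : x ∈ C, ‖y‖ ≤ ε}. Then A is convex. -/
noncomputable section

/-- All (complex) eigenvalues of the real matrix `M` have modulus less than 1. -/
def specLt1 {m : ℕ} (M : Matrix (Fin m) (Fin m) ℝ) : Prop :=
  ∀ μ ∈ spectrum ℂ (M.map Complex.ofReal), ‖μ‖ < 1

/-- The set-valued map `L_ε(C) = {L(x) + y : x ∈ C, ‖y‖ ≤ ε}`. -/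
def Leps {m : ℕ} (M : Matrix (Fin m) (Fin m) ℝ) (ε : ℝ)
    (C : Set (EuclideanSpace ℝ (Fin m))) : Set (EuclideanSpace ℝ (Fin m)) :=
  {z | ∃ x ∈ C, ∃ y : EuclideanSpace ℝ (Fin m), ‖y‖ ≤ ε ∧ z = Matrix.toEuclideanLin M x + y}

/-!
Write `L_ε(C) = L(C) + B` with `B` the closed `ε`-ball. Iterating gives
`L_ε^n(C) = Lⁿ(C) + S_n` with an error set `S_n` independent of `C`, so two fixed points `C`, `D`
agree up to `‖Lⁿ‖ · diam`, which tends to `0` by Gelfand's formula since the spectral radius of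
`L` is below `1`: a bounded fixed point lies in the closure of any nonempty one. Because `B` is
convex, `L_ε` commutes with taking convex hulls, so `conv A` is a bounded fixed point and hence
`conv A ⊆ A`.
-/

open Set Metric Filter Topology Pointwise Function

theorem tendsto_pow_atTop_nhds_zero_of_forall_norm_lt_one {A : Type*} [NormedRing A]
    [NormedAlgebra ℂ A] [CompleteSpace A] {a : A}
    (ha : ∀ z ∈ spectrum ℂ a, ‖z‖ < 1) : Tendsto (fun n : ℕ ↦ a ^ n) atTop (𝓝 0) := by
  rcases subsingleton_or_nontrivial A with hA | hA
  · simpa only [Subsingleton.elim _ (0 : A)] using tendsto_const_nhds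
  obtain ⟨r, hρr, hr1⟩ := ENNReal.lt_iff_exists_nnreal_btwn.mp <|
    spectrum.spectralRadius_lt_of_forall_lt a (r := 1) fun z hz ↦ by exact_mod_cast ha z hz
  replace hr1 : (r : ℝ) < 1 := by exact_mod_cast hr1
  have hgelfand :=
    (spectrum.pow_norm_pow_one_div_tendsto_nhds_spectralRadius a).eventually_lt_const hρr
  have hlt : ∀ᶠ n : ℕ in atTop, ‖a ^ n‖ ≤ (r : ℝ) ^ n := by
    filter_upwards [hgelfand, eventually_ne_atTop 0] with n hn hn0
    have hroot := (ENNReal.ofReal_lt_iff_lt_toReal (by positivity) ENNReal.coe_ne_top).1 hn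
    calc ‖a ^ n‖ = (‖a ^ n‖ ^ (1 / n : ℝ)) ^ n := by
          rw [one_div, Real.rpow_inv_natCast_pow (norm_nonneg _) hn0]
      _ ≤ (r : ℝ) ^ n := pow_le_pow_left₀ (by positivity) hroot.le n
  exact squeeze_zero_norm' hlt (tendsto_pow_atTop_nhds_zero_of_lt_one r.2 hr1)

theorem Matrix.tendsto_toEuclideanCLM_pow_atTop_nhds_zero {m : ℕ} {M : Matrix (Fin m) (Fin m) ℝ}
    (hM : ∀ μ ∈ spectrum ℂ (M.map Complex.ofReal), ‖μ‖ < 1) :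
    Tendsto (fun n : ℕ ↦ Matrix.toEuclideanCLM (𝕜 := ℝ) M ^ n) atTop (𝓝 0) := by
  let eC := (Matrix.toEuclideanCLM (n := Fin m) (𝕜 := ℂ)).toAlgEquiv
  let eR := (Matrix.toEuclideanCLM (n := Fin m) (𝕜 := ℝ)).toAlgEquiv
  have hC : Tendsto (fun n : ℕ ↦ eC (M.map Complex.ofReal) ^ n) atTop (𝓝 0) :=
    tendsto_pow_atTop_nhds_zero_of_forall_norm_lt_one <| by
      rwa [AlgEquiv.spectrum_eq]
  -- taking real parts of the entries is a continuous way back from complex to real operators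
  let back : (EuclideanSpace ℂ (Fin m) →L[ℂ] EuclideanSpace ℂ (Fin m)) →
      (EuclideanSpace ℝ (Fin m) →L[ℝ] EuclideanSpace ℝ (Fin m)) :=
    fun T ↦ eR ((eC.symm T).map Complex.re)
  have hback : Continuous back := by
    have h1 : Continuous eC.symm :=
      LinearMap.continuous_of_finiteDimensional eC.symm.toLinearEquiv.toLinearMap
    have h2 : Continuous eR :=
      LinearMap.continuous_of_finiteDimensional eR.toLinearEquiv.toLinearMap
    exact h2.comp (h1.matrix_map Complex.continuous_re)
  have hpow : ∀ n : ℕ, back (eC (M.map Complex.ofReal) ^ n) = eR M ^ n := by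
    intro n
    have : (M.map Complex.ofReal) ^ n = (M ^ n).map Complex.ofReal :=
      (map_pow (Complex.ofRealHom.mapMatrix (m := Fin m)) M n).symm
    simp only [back, ← map_pow, AlgEquiv.symm_apply_apply, this, Matrix.map_map,
      show Complex.re ∘ Complex.ofReal = id from funext Complex.ofReal_re, Matrix.map_id]
  have h0 : back 0 = 0 := by simp [back]
  have := (hback.tendsto 0).comp hC
  simp only [Function.comp_def, hpow, h0] at this
  exact this

theorem iterate_image_add_eq {E F : Type*} [AddCommMonoid E] [FunLike F E E]
    [AddMonoidHomClass F E E]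
    (g : F) (B C : Set E) (n : ℕ) :
    (fun T ↦ g '' T + B)^[n] C = (⇑g)^[n] '' C + (fun T ↦ g '' T + B)^[n] {0} := by
  induction n with
  | zero => simp
  | succ n ih =>
    simp only [iterate_succ_apply', ih, image_add, image_image, add_assoc]

theorem Function.IsFixedPt.convexHull_image_add {𝕜 E : Type*} [Field 𝕜] [LinearOrder 𝕜]
    [IsStrictOrderedRing 𝕜] [AddCommGroup E] [Module 𝕜 E] {g : E →ₗ[𝕜] E} {B C : Set E}
    (hC : IsFixedPt (fun T ↦ g '' T + B) C) (hB : Convex 𝕜 B) :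
    IsFixedPt (fun T ↦ g '' T + B) (convexHull 𝕜 C) := by
  change g '' convexHull 𝕜 C + B = convexHull 𝕜 C
  conv_rhs => rw [← hC.eq]
  rw [convexHull_add, g.image_convexHull, hB.convexHull_eq]

theorem Function.IsFixedPt.subset_of_image_add {𝕜 E : Type*} [NontriviallyNormedField 𝕜]
    [NormedAddCommGroup E] [NormedSpace 𝕜 E] {g : E →L[𝕜] E}
    (hg : Tendsto (fun n : ℕ ↦ g ^ n) atTop (𝓝 0)) {B C D : Set E}
    (hC : IsFixedPt (fun T ↦ g '' T + B) C) (hD : IsFixedPt (fun T ↦ g '' T + B) D)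
    (hCne : C.Nonempty) (hCcl : IsClosed C) (hDb : Bornology.IsBounded D) : D ⊆ C := by
  obtain ⟨a, ha⟩ := hCne
  obtain ⟨R, hR⟩ := isBounded_iff_forall_norm_le.1 hDb
  intro x hx
  have hdist : ∀ n : ℕ, infDist x C ≤ ‖g ^ n‖ * (R + ‖a‖) := by
    intro n
    have hCn := (hC.iterate n).eq
    have hDn := (hD.iterate n).eq
    rw [iterate_image_add_eq, ← FunLike.coe_pow_eq_iterate] at hCn hDn
    obtain ⟨_, ⟨d, hd, rfl⟩, s, hs, rfl⟩ := hDn ▸ hx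
    have hmem : (g ^ n) a + s ∈ C := hCn ▸ add_mem_add (mem_image_of_mem _ ha) hs
    calc infDist ((g ^ n) d + s) C ≤ dist ((g ^ n) d + s) ((g ^ n) a + s) :=
          infDist_le_dist_of_mem hmem
      _ = ‖(g ^ n) (d - a)‖ := by rw [dist_add_right, dist_eq_norm, map_sub]
      _ ≤ ‖g ^ n‖ * ‖d - a‖ := (g ^ n).le_opNorm _
      _ ≤ ‖g ^ n‖ * (R + ‖a‖) := by
          gcongr
          exact (norm_sub_le d a).trans (by gcongr; exact hR d hd)
  have hlim : Tendsto (fun n : ℕ ↦ ‖g ^ n‖ * (R + ‖a‖)) atTop (𝓝 0) := by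
    simpa using hg.norm.mul_const (R + ‖a‖)
  exact (hCcl.mem_iff_infDist_zero ⟨a, ha⟩).2 <|
    (ge_of_tendsto' hlim hdist).antisymm infDist_nonneg

theorem Leps_eq_image_add_closedBall {m : ℕ} (M : Matrix (Fin m) (Fin m) ℝ) (ε : ℝ)
    (C : Set (EuclideanSpace ℝ (Fin m))) :
    Leps M ε C = Matrix.toEuclideanCLM (𝕜 := ℝ) M '' C + closedBall 0 ε := by
  ext z
  simp only [Leps, mem_ofPred_eq, Set.mem_add, mem_image, mem_closedBall, dist_zero_right]
  constructor
  · rintro ⟨x, hx, y, hy, rfl⟩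
    exact ⟨_, ⟨x, hx, rfl⟩, y, hy, rfl⟩
  · rintro ⟨_, ⟨x, hx, rfl⟩, y, hy, rfl⟩
    exact ⟨x, hx, y, hy, rfl⟩

theorem stmt7_general {m : ℕ} (M : Matrix (Fin m) (Fin m) ℝ)
    (hspec : specLt1 M) (ε : ℝ) (A : Set (EuclideanSpace ℝ (Fin m)))
    (hAne : A.Nonempty) (hAcomp : IsCompact A) (hAfix : Leps M ε A = A) :
    Convex ℝ A := by
  have hA : IsFixedPt (fun T ↦ Matrix.toEuclideanCLM (𝕜 := ℝ) M '' T + closedBall 0 ε) A := by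
    rw [IsFixedPt, ← Leps_eq_image_add_closedBall, hAfix]
  have hconv : convexHull ℝ A ⊆ A :=
    IsFixedPt.subset_of_image_add (Matrix.tendsto_toEuclideanCLM_pow_atTop_nhds_zero hspec) hA
      (hA.convexHull_image_add (convex_closedBall 0 ε)) hAne hAcomp.isClosed
      (isBounded_convexHull.2 hAcomp.isBounded)
  exact convexHull_eq_self.1 (hconv.antisymm (subset_convexHull ℝ A))

/-- The (unique) nonempty compact fixed point of `L_ε` is convex. -/
theorem stmt7 {m : ℕ} (M : Matrix (Fin m) (Fin m) ℝ) (hdet : IsUnit M.det)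
    (hspec : specLt1 M) (ε : ℝ) (hε : 0 < ε) (A : Set (EuclideanSpace ℝ (Fin m)))
    (hAne : A.Nonempty) (hAcomp : IsCompact A) (hAfix : Leps M ε A = A) :
    Convex ℝ A :=
  stmt7_general M hspec ε A hAne hAcomp hAfix
end
end

section
/- Let L ∈ GL(m, ℝ) have all eigenvalues of modulus less than 1, ε > 0, and let A be the unique compact fixed point of L_ε. Then A is strictly convex: no two distinct boundary points of A admit a common outward unit normal vector. -/
open scoped RealInnerProductSpace

noncomputable section

/-! A point `a` of `A = T A + B̄(0, ε)` with outward unit normal `n` can only arise as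
`a = T a' + ε n`, and then `a'` is a point of `A` with outward normal `Tᵀ n`, which is
nonzero because `T` is invertible. Hence two points `x, y` sharing an outward normal satisfy
`x - y = T (x' - y')` with `x', y'` again sharing one, and iterating gives
`x - y ∈ T^k (A - A)` for every `k`. Since the spectral radius of `T` is less than `1`,
Gelfand's formula gives `T^k → 0`, and `A` is bounded, so `x = y`. -/

open Filter Topology
open scoped Pointwise

def normalCone {E : Type*} [NormedAddCommGroup E] [InnerProductSpace ℝ E] (A : Set E) (x : E) :
    Set E :=
  {n | ∀ z ∈ A, ⟪z - x, n⟫ ≤ 0}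

section SelfSimilar

variable {E : Type*} [NormedAddCommGroup E] [InnerProductSpace ℝ E]
  {T : E →L[ℝ] E} {ε : ℝ} {A : Set E}

theorem exists_eq_add_smul_of_mem_normalCone (hA : T '' A + Metric.closedBall 0 ε = A)
    {a n : E} (ha : a ∈ A) (hn : ‖n‖ = 1) (han : n ∈ normalCone A a) :
    ∃ a' ∈ A, a = T a' + ε • n ∧ n ∈ normalCone (T '' A) (T a') := by
  rw [← hA] at ha
  obtain ⟨_, ⟨a', ha', rfl⟩, u, hu_norm, rfl⟩ := ha
  rw [mem_closedBall_zero_iff] at hu_norm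
  have hε : 0 ≤ ε := (norm_nonneg u).trans hu_norm
  have hmem : ∀ c ∈ A, T c + ε • n ∈ A := fun c hc =>
    hA ▸ Set.add_mem_add (Set.mem_image_of_mem T hc)
      (by rw [mem_closedBall_zero_iff, norm_smul, hn, mul_one, Real.norm_of_nonneg hε])
  have hsupp : ∀ c ∈ A, ⟪T c - T a', n⟫ + ε ≤ ⟪u, n⟫ := fun c hc => by
    have key : ⟪T c + ε • n - (T a' + u), n⟫ = ⟪T c - T a', n⟫ + ε - ⟪u, n⟫ := by
      rw [show T c + ε • n - (T a' + u) = T c - T a' + ε • n - u by abel, inner_sub_left,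
        inner_add_left, real_inner_smul_left, real_inner_self_eq_norm_sq, hn]
      ring
    linarith [han _ (hmem c hc)]
  have hεu : ε ≤ ⟪u, n⟫ := by simpa using hsupp a' ha'
  have hu_le : ⟪u, n⟫ ≤ ‖u‖ := by simpa [hn] using real_inner_le_norm u n
  have hu : u = ε • n := by
    have hcs : ⟪u, n⟫ = ‖u‖ * ‖n‖ := by rw [hn]; linarith
    rw [← le_antisymm hu_norm (by linarith)]
    simpa [hn] using inner_eq_norm_mul_iff_real.mp hcs
  refine ⟨a', ha', by rw [hu], ?_⟩
  rintro _ ⟨c, hc, rfl⟩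
  have := hsupp c hc
  rw [hu, real_inner_smul_left, real_inner_self_eq_norm_sq, hn] at this
  linarith

theorem smul_mem_normalCone {a n : E} {c : ℝ} (hc : 0 ≤ c) (h : n ∈ normalCone A a) :
    c • n ∈ normalCone A a := fun z hz => by
  rw [real_inner_smul_right]
  exact mul_nonpos_of_nonneg_of_nonpos hc (h z hz)

variable [CompleteSpace E]

theorem adjoint_apply_mem_normalCone {a n : E} (h : n ∈ normalCone (T '' A) (T a)) :
    T.adjoint n ∈ normalCone A a := fun z hz => by
  rw [ContinuousLinearMap.adjoint_inner_right, map_sub]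
  exact h _ (Set.mem_image_of_mem T hz)

theorem adjoint_apply_ne_zero {n : E} (hT : Function.Surjective T) (hn : n ≠ 0) :
    T.adjoint n ≠ 0 := fun h => by
  obtain ⟨d, hd⟩ := hT n
  have := ContinuousLinearMap.adjoint_inner_right T d n
  rw [h, inner_zero_right, hd, eq_comm, inner_self_eq_zero] at this
  exact hn this

theorem exists_sub_eq_apply_sub_of_mem_normalCone (hT : Function.Surjective T)
    (hA : T '' A + Metric.closedBall 0 ε = A) {a b n : E} (ha : a ∈ A) (hb : b ∈ A)
    (hn : ‖n‖ = 1) (han : n ∈ normalCone A a) (hbn : n ∈ normalCone A b) :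
    ∃ a' ∈ A, ∃ b' ∈ A, ∃ n' : E, ‖n'‖ = 1 ∧ n' ∈ normalCone A a' ∧
      n' ∈ normalCone A b' ∧ a - b = T (a' - b') := by
  obtain ⟨a', ha', rfl, ha'n⟩ := exists_eq_add_smul_of_mem_normalCone hA ha hn han
  obtain ⟨b', hb', rfl, hb'n⟩ := exists_eq_add_smul_of_mem_normalCone hA hb hn hbn
  have hw := adjoint_apply_ne_zero hT (norm_ne_zero_iff.mp (hn ▸ one_ne_zero))
  refine ⟨a', ha', b', hb', ‖T.adjoint n‖⁻¹ • T.adjoint n, norm_smul_inv_norm hw,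
    smul_mem_normalCone (by positivity) (adjoint_apply_mem_normalCone ha'n),
    smul_mem_normalCone (by positivity) (adjoint_apply_mem_normalCone hb'n), ?_⟩
  rw [map_sub]
  abel

theorem exists_sub_eq_pow_apply_sub_of_mem_normalCone (hT : Function.Surjective T)
    (hA : T '' A + Metric.closedBall 0 ε = A) (k : ℕ) {x y n : E} (hx : x ∈ A) (hy : y ∈ A)
    (hn : ‖n‖ = 1) (hxn : n ∈ normalCone A x) (hyn : n ∈ normalCone A y) :
    ∃ a ∈ A, ∃ b ∈ A, x - y = (T ^ k) (a - b) := by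
  induction k generalizing x y n with
  | zero => exact ⟨x, hx, y, hy, rfl⟩
  | succ k ih =>
    obtain ⟨x', hx', y', hy', n', hn', hx'n, hy'n, hxy⟩ :=
      exists_sub_eq_apply_sub_of_mem_normalCone hT hA hx hy hn hxn hyn
    obtain ⟨a, ha, b, hb, hx'y'⟩ := ih hx' hy' hn' hx'n hy'n
    exact ⟨a, ha, b, hb, by rw [hxy, hx'y', pow_succ']; rfl⟩

theorem eq_of_mem_normalCone_of_tendsto_pow (hT : Function.Surjective T)
    (hA : T '' A + Metric.closedBall 0 ε = A) (hAb : Bornology.IsBounded A)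
    (hpow : Tendsto (T ^ ·) atTop (𝓝 0)) {x y n : E} (hx : x ∈ A) (hy : y ∈ A)
    (hn : ‖n‖ = 1) (hxn : n ∈ normalCone A x) (hyn : n ∈ normalCone A y) : x = y := by
  obtain ⟨D, hD⟩ := Metric.isBounded_iff.mp hAb
  have hle : ∀ k : ℕ, ‖x - y‖ ≤ ‖T ^ k‖ * D := fun k => by
    obtain ⟨a, ha, b, hb, hxy⟩ :=
      exists_sub_eq_pow_apply_sub_of_mem_normalCone hT hA k hx hy hn hxn hyn
    rw [hxy]
    exact (T ^ k).le_opNorm_of_le (dist_eq_norm a b ▸ hD ha hb)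
  have hlim : Tendsto (fun k : ℕ => ‖T ^ k‖ * D) atTop (𝓝 0) := by
    simpa using hpow.norm.mul_const D
  exact sub_eq_zero.mp (norm_le_zero_iff.mp (ge_of_tendsto' hlim hle))

end SelfSimilar

theorem tendsto_pow_atTop_nhds_zero_of_spectralRadius_lt_one {A : Type*} [NormedRing A]
    [NormedAlgebra ℂ A] [CompleteSpace A] {a : A} (ha : spectralRadius ℂ a < 1) :
    Tendsto (a ^ ·) atTop (𝓝 0) := by
  obtain ⟨r, hρr, hr1⟩ := ENNReal.lt_iff_exists_nnreal_btwn.mp ha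
  have hpow : ∀ᶠ k : ℕ in atTop, ‖a ^ k‖ ≤ (r : ℝ) ^ k := by
    have hgelfand := spectrum.pow_nnnorm_pow_one_div_tendsto_nhds_spectralRadius a
    filter_upwards [hgelfand.eventually_lt_const hρr, eventually_gt_atTop 0] with k hk hk0
    rw [one_div, ENNReal.rpow_inv_lt_iff (by positivity), ENNReal.rpow_natCast, ← ENNReal.coe_pow,
      ENNReal.coe_lt_coe, ← NNReal.coe_lt_coe] at hk
    exact_mod_cast hk.le
  exact tendsto_zero_iff_norm_tendsto_zero.mpr <|
    squeeze_zero' (.of_forall fun _ => norm_nonneg _) hpow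
      (tendsto_pow_atTop_nhds_zero_of_lt_one r.coe_nonneg (by exact_mod_cast hr1))

namespace Matrix

variable {m : ℕ} {M : Matrix (Fin m) (Fin m) ℝ}

theorem tendsto_pow_atTop_nhds_zero_of_specLt1 (hM : specLt1 M) :
    Tendsto (M ^ ·) atTop (𝓝 0) := by
  rcases isEmpty_or_nonempty (Fin m) with _ | _
  · simp only [Subsingleton.elim _ (0 : Matrix (Fin m) (Fin m) ℝ), tendsto_const_nhds]
  -- Any Banach algebra norm on complex matrices will do, since the spectrum is purely algebraic.
  let _ := Matrix.linftyOpNormedRing (n := Fin m) (α := ℂ)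
  let _ := Matrix.linftyOpNormedAlgebra (n := Fin m) (R := ℂ) (α := ℂ)
  have hρ : spectralRadius ℂ (M.map Complex.ofReal) < 1 := by
    simpa using spectrum.spectralRadius_lt_of_forall_lt (M.map Complex.ofReal) (r := 1)
      fun z hz => by simpa [← NNReal.coe_lt_coe] using hM z hz
  have hre : Continuous fun N : Matrix (Fin m) (Fin m) ℂ => N.map Complex.re :=
    continuous_id.matrix_map Complex.continuous_re
  have := (hre.tendsto 0).comp (tendsto_pow_atTop_nhds_zero_of_spectralRadius_lt_one hρ)
  convert this using 2 with k
  · have hpow : M.map Complex.ofReal ^ k = (M ^ k).map Complex.ofReal :=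
      (map_pow Complex.ofRealHom.mapMatrix M k).symm
    simp [hpow, Matrix.map_map, Function.comp_def]
  · simp

theorem Leps_eq_image_add_closedBall (ε : ℝ) (C : Set (EuclideanSpace ℝ (Fin m))) :
    Leps M ε C = toEuclideanCLM (𝕜 := ℝ) M '' C + Metric.closedBall 0 ε := by
  ext z
  constructor
  · rintro ⟨x, hx, y, hy, rfl⟩
    exact ⟨_, ⟨x, hx, rfl⟩, y, mem_closedBall_zero_iff.mpr hy, rfl⟩
  · rintro ⟨_, ⟨x, hx, rfl⟩, y, hy, rfl⟩
    exact ⟨x, hx, y, mem_closedBall_zero_iff.mp hy, rfl⟩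

theorem surjective_toEuclideanCLM (hM : IsUnit M.det) :
    Function.Surjective (toEuclideanCLM (𝕜 := ℝ) M) := by
  obtain ⟨u, hu⟩ :=
    ((isUnit_iff_isUnit_det M).mpr hM).map (toEuclideanCLM (n := Fin m) (𝕜 := ℝ))
  exact fun v => ⟨(↑u⁻¹ : EuclideanSpace ℝ (Fin m) →L[ℝ] _) v, by
    rw [← hu]; exact congrArg (· v) u.mul_inv⟩

theorem tendsto_toEuclideanCLM_pow_nhds_zero (hM : specLt1 M) :
    Tendsto (toEuclideanCLM (𝕜 := ℝ) M ^ ·) atTop (𝓝 0) := by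
  have hcont : Continuous (toEuclideanCLM (n := Fin m) (𝕜 := ℝ)) :=
    LinearMap.continuous_of_finiteDimensional
      (toEuclideanCLM (n := Fin m) (𝕜 := ℝ)).toAlgEquiv.toLinearMap
  simpa [Function.comp_def, map_pow] using
    (hcont.tendsto 0).comp (tendsto_pow_atTop_nhds_zero_of_specLt1 hM)

end Matrix

theorem stmt12_general {m : ℕ} (M : Matrix (Fin m) (Fin m) ℝ) (hdet : IsUnit M.det)
    (hspec : specLt1 M) (ε : ℝ) (A : Set (EuclideanSpace ℝ (Fin m)))
    (hAcomp : IsCompact A) (hAfix : Leps M ε A = A) :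
    ∀ x ∈ frontier A, ∀ y ∈ frontier A, ∀ n : EuclideanSpace ℝ (Fin m), ‖n‖ = 1 →
      (∀ z ∈ A, ⟪z - x, n⟫ ≤ 0) → (∀ z ∈ A, ⟪z - y, n⟫ ≤ 0) → x = y := by
  intro x hx y hy n hn hxn hyn
  rw [Matrix.Leps_eq_image_add_closedBall] at hAfix
  exact eq_of_mem_normalCone_of_tendsto_pow (Matrix.surjective_toEuclideanCLM hdet) hAfix
    hAcomp.isBounded (Matrix.tendsto_toEuclideanCLM_pow_nhds_zero hspec)
    (hAcomp.isClosed.frontier_subset hx) (hAcomp.isClosed.frontier_subset hy) hn hxn hyn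

/-- The unique compact fixed point `A` of `L_ε` is strictly convex: no two distinct boundary
points admit a common outward unit normal. -/
theorem stmt12 {m : ℕ} (M : Matrix (Fin m) (Fin m) ℝ) (hdet : IsUnit M.det)
    (hspec : specLt1 M) (ε : ℝ) (hε : 0 < ε) (A : Set (EuclideanSpace ℝ (Fin m)))
    (hAne : A.Nonempty) (hAcomp : IsCompact A) (hAfix : Leps M ε A = A) :
    ∀ x ∈ frontier A, ∀ y ∈ frontier A, ∀ n : EuclideanSpace ℝ (Fin m), ‖n‖ = 1 →
      (∀ z ∈ A, ⟪z - x, n⟫ ≤ 0) → (∀ z ∈ A, ⟪z - y, n⟫ ≤ 0) → x = y :=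
  stmt12_general M hdet hspec ε A hAcomp hAfix
end
end
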